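/- arXiv:2506.09598 — 3 statements merged into one kernel-verified Lean document; each statement's English description precedes it below -/
import Mathlib

section
/- Let c ≥ 2, let λ be a partition with sum (c-1)k+1 and μ a partition with sum k, and suppose ∑λᵢ² + ∑μⱼ² = (c-2)k² + 2k + 1. Let λ' = (λ'₁,…,λ'_c) be any sublist of λ (allowing zero parts), λ'' = λ \ λ', and p = (c-2)k + 1 - ∑ᵢ λ'ᵢ. Then the linked pair, consisting of the multiset {λ'₁+p, …, λ'_c+p} ∪ μ on one side and λ'' on the other, satisfies the same relation: ∑(λ'ᵢ+p)² + ∑μⱼ² + ∑(λ''ᵢ)² = (c-2)(k+p)² + 2(k+p) + 1. -/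
lemma shift_sq_sum (l : List ℤ) (p : ℤ) :
    ((l.map (fun x => x + p)).map (fun x => x ^ 2)).sum
      = (l.map (fun x => x ^ 2)).sum + 2 * p * l.sum + l.length * p ^ 2 := by
  induction l with
  | nil => simp
  | cons a t ih => simp only [List.map_map, List.map_cons, List.sum_cons, List.length_cons] at *; rw [ih]; push_cast; ring

/-- Squares formula invariance under linkage: if a pair of partitions
`(λ' ++ λ'', μ)` in codimension `c` satisfies `∑λᵢ = (c-1)k+1`, `∑μⱼ = k` and
`∑λᵢ² + ∑μⱼ² = (c-2)k² + 2k + 1`, then the linked pair, with first partition the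
multiset `{λ'₁+p, …, λ'_c+p} ∪ μ` and second partition `λ''`, where
`p = (c-2)k + 1 - ∑λ'ᵢ`, satisfies the same relation at level `k + p`. -/
theorem stmt0 (c : ℕ) (hc : 2 ≤ c) (lam' lam'' mu : List ℤ) (k p : ℤ)
    (hk : mu.sum = k)
    (hlen : lam'.length = c)
    (hsum : lam'.sum + lam''.sum = ((c : ℤ) - 1) * k + 1)
    (hsq : (lam'.map (fun x => x ^ 2)).sum + (lam''.map (fun x => x ^ 2)).sum
            + (mu.map (fun x => x ^ 2)).sum = ((c : ℤ) - 2) * k ^ 2 + 2 * k + 1)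
    (hp : p = ((c : ℤ) - 2) * k + 1 - lam'.sum) :
    ((lam'.map (fun x => x + p)).map (fun x => x ^ 2)).sum
      + (mu.map (fun x => x ^ 2)).sum
      + (lam''.map (fun x => x ^ 2)).sum
      = ((c : ℤ) - 2) * (k + p) ^ 2 + 2 * (k + p) + 1 := by
  rw [shift_sq_sum, hlen]
  have hs' : lam'.sum = ((c : ℤ) - 2) * k + 1 - p := by linarith
  linear_combination hsq + 2 * p * hs'
end

section
/- Let (λ, μ) be a codimension-3 decoration with k = ∑μⱼ, λ = (λ₁ ≥ λ₂ ≥ …), μ = (μ₁ ≥ …), other than the pair ((1,1,1),(1)). If μ₁ + λ₁ + λ₂ ≤ k+1, then the smallest minimal link S' of (λ, μ) satisfies: the smallest minimal link of S' equals (λ, μ) again; consequently every decoration satisfies μ₁ + λ₁ + λ₂ > k + 1. -/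
/-- Sort a list of integers in non-increasing order. -/
def rsort (l : List ℤ) : List ℤ := List.insertionSort (· ≥ ·) l

/-- Remove all non-positive parts (trailing zeros) from a partition. -/
def strip (l : List ℤ) : List ℤ := l.filter (fun x => 0 < x)

/-- The smallest minimal link of a codimension-`c` pair of partitions `(λ, μ)`:
choose the `c` largest parts of `λ` (padding with zeros if needed), shift them by
`p = (c-2)k + 1 - (λ₁ + ⋯ + λ_c)` where `k = ∑ μⱼ`, merge with `μ` and re-sort;
the other partition becomes `(λ_{c+1}, …, λ_b)`. -/
def smlink (c : ℕ) (P : List ℤ × List ℤ) : List ℤ × List ℤ :=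
  let p : ℤ := ((c : ℤ) - 2) * P.2.sum + 1 - (P.1.take c).sum
  (strip (rsort ((P.1.take c ++ List.replicate (c - P.1.length) 0).map (· + p) ++ P.2)),
   strip (P.1.drop c))

/-- The smallest minimal link of `P` produces nonnegative parts, i.e. `λ_c + p ≥ 0`. -/
def ValidLink (c : ℕ) (P : List ℤ × List ℤ) : Prop :=
  0 ≤ P.1.getD (c - 1) 0 + (((c : ℤ) - 2) * P.2.sum + 1 - (P.1.take c).sum)

/-- A partition: a non-increasing list of positive integers. -/
def IsPartition (l : List ℤ) : Prop := l.Pairwise (· ≥ ·) ∧ ∀ x ∈ l, 0 < x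

/-- A codimension-`c` decoration: a pair of partitions reachable to the complete
intersection pair `((1^c), (1))` by finitely many smallest minimal links, all of
whose intermediate links are valid (have nonnegative parts). -/
def IsDecoration (c : ℕ) (P : List ℤ × List ℤ) : Prop :=
  IsPartition P.1 ∧ IsPartition P.2 ∧
  ∃ n : ℕ, (∀ m < n, ValidLink c ((smlink c)^[m] P)) ∧
    (smlink c)^[n] P = (List.replicate c 1, [1])

/-!
Along a valid smallest minimal link in codimension `c`, the defect `|λ| - (c-1)|μ| - 1` is
multiplied by `-(c-1)`; it vanishes at the complete intersection, hence on every decoration,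
i.e. `|λ| = (c-1)k + 1`. With this relation the shift `p` of the second link is `-p`. If
moreover `μ₁ ≤ λ_c + p` (for `c = 3` this is `μ₁ + λ₁ + λ₂ ≤ k + 1`), the first link merely
puts `λ₁ + p, …, λ_c + p` in front of `μ` without re-sorting, so the second link undoes it.

A pair fixed by the double link only ever visits itself and its link. The link of the complete
intersection is `((1), ∅)`, a fixed point, so such a pair reaches the complete intersection only
if it is the complete intersection, where `μ₁ + λ₁ + λ₂ = 3 > k + 1`.
-/

open scoped List

section RsortStrip

variable {l l' : List ℤ}

lemma pairwise_rsort (l : List ℤ) : (rsort l).Pairwise (· ≥ ·) := List.pairwise_insertionSort _ l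

lemma perm_rsort (l : List ℤ) : rsort l ~ l := List.perm_insertionSort _ l

lemma rsort_eq_of_perm (hp : l ~ l') (hs : l'.Pairwise (· ≥ ·)) : rsort l = l' :=
  ((perm_rsort l).trans hp).eq_of_pairwise' (pairwise_rsort l) hs

lemma strip_eq_self (h : ∀ x ∈ l, 0 < x) : strip l = l :=
  List.filter_eq_self.2 (by simpa using h)

lemma sum_strip (h : ∀ x ∈ l, 0 ≤ x) : (strip l).sum = l.sum := by
  induction l with
  | nil => rfl
  | cons a t ih =>
    simp only [List.forall_mem_cons] at h
    rcases h.1.lt_or_eq with ha | rfl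
    · simp [strip, ha, ← ih h.2]
    · simpa [strip] using ih h.2

lemma isPartition_strip (h : l.Pairwise (· ≥ ·)) : IsPartition (strip l) :=
  ⟨h.sublist List.filter_sublist, fun x hx => by simpa using (List.mem_filter.1 hx).2⟩

lemma eq_singleton_one_of_sum_eq_one (h : ∀ x ∈ l, 0 < x) (hs : l.sum = 1) : l = [1] := by
  obtain _ | ⟨x, t⟩ := l
  · simp at hs
  · simp only [List.forall_mem_cons, List.sum_cons] at h hs
    obtain rfl | ht := eq_or_ne t []
    · simp at hs; simp [hs]
    · have := List.sum_pos _ h.2 ht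
      omega

end RsortStrip

def topParts (c : ℕ) (l : List ℤ) : List ℤ := l.take c ++ List.replicate (c - l.length) 0

section TopParts

variable {c : ℕ} {l : List ℤ}

@[simp]
lemma length_topParts (c : ℕ) (l : List ℤ) : (topParts c l).length = c := by
  simp only [topParts, List.length_append, List.length_take, List.length_replicate]; omega

@[simp]
lemma sum_topParts (c : ℕ) (l : List ℤ) : (topParts c l).sum = (l.take c).sum := by
  simp [topParts]

lemma getD_le_of_mem_topParts (hl : IsPartition l) {x : ℤ} (hx : x ∈ topParts c l) :
    l.getD (c - 1) 0 ≤ x := by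
  rcases List.mem_append.1 hx with hx | hx
  · obtain ⟨i, hi, rfl⟩ := List.mem_iff_getElem.1 hx
    simp only [List.length_take] at hi
    rw [List.getElem_take, List.getD_eq_getElem?_getD]
    by_cases hc : c - 1 < l.length
    · rw [List.getElem?_eq_getElem hc, Option.getD_some]
      rcases (show i ≤ c - 1 by omega).lt_or_eq with hlt | rfl
      · exact List.pairwise_iff_getElem.1 hl.1 _ _ _ _ hlt
      · rfl
    · rw [List.getElem?_eq_none (by omega)]
      exact (hl.2 _ (List.getElem_mem _)).le
  · obtain ⟨hc, rfl⟩ := List.mem_replicate.1 hx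
    simp [List.getD_eq_getElem?_getD, List.getElem?_eq_none (by omega : l.length ≤ c - 1)]

lemma pairwise_topParts (hl : IsPartition l) : (topParts c l).Pairwise (· ≥ ·) := by
  refine List.pairwise_append.2 ⟨hl.1.sublist (List.take_sublist _ _),
    List.pairwise_replicate.2 (Or.inr le_rfl), fun x hx y hy => ?_⟩
  rw [List.eq_of_mem_replicate hy]
  exact (hl.2 x (List.mem_of_mem_take hx)).le

lemma topParts_append_drop_perm (c : ℕ) (l : List ℤ) :
    topParts c l ++ l.drop c ~ l ++ List.replicate (c - l.length) 0 := by
  have h := (List.perm_append_comm (l₁ := List.replicate (c - l.length) 0)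
    (l₂ := l.drop c)).append_left (l.take c)
  rwa [← List.append_assoc, ← List.append_assoc, List.take_append_drop] at h

lemma strip_rsort_topParts_append_drop (hl : IsPartition l) :
    strip (rsort (topParts c l ++ l.drop c)) = l := by
  have hsorted : (l ++ List.replicate (c - l.length) 0).Pairwise (· ≥ ·) :=
    List.pairwise_append.2 ⟨hl.1, List.pairwise_replicate.2 (Or.inr le_rfl),
      fun x hx y hy => by rw [List.eq_of_mem_replicate hy]; exact (hl.2 x hx).le⟩
  rw [rsort_eq_of_perm (topParts_append_drop_perm c l) hsorted]
  rw [strip, List.filter_append, ← strip, strip_eq_self hl.2]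
  simp

end TopParts

def linkShift (c : ℕ) (P : List ℤ × List ℤ) : ℤ := ((c : ℤ) - 2) * P.2.sum + 1 - (P.1.take c).sum

def linkDefect (c : ℕ) (P : List ℤ × List ℤ) : ℤ := P.1.sum - ((c : ℤ) - 1) * P.2.sum - 1

section Link

variable {c : ℕ} {P : List ℤ × List ℤ}

lemma smlink_eq (c : ℕ) (P : List ℤ × List ℤ) :
    smlink c P = (strip (rsort ((topParts c P.1).map (· + linkShift c P) ++ P.2)),
      strip (P.1.drop c)) := rfl

lemma isPartition_smlink_fst (c : ℕ) (P : List ℤ × List ℤ) : IsPartition (smlink c P).1 :=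
  isPartition_strip (pairwise_rsort _)

lemma pos_of_mem_smlink_snd {x : ℤ} (hx : x ∈ (smlink c P).2) : 0 < x := by
  simpa using (List.mem_filter.1 hx).2

lemma sum_smlink_fst (hlam : IsPartition P.1) (hmu : ∀ x ∈ P.2, 0 ≤ x) (hv : ValidLink c P) :
    (smlink c P).1.sum = (P.1.take c).sum + c * linkShift c P + P.2.sum := by
  have hnonneg : ∀ x ∈ (topParts c P.1).map (· + linkShift c P) ++ P.2, 0 ≤ x := by
    simp only [List.mem_append, List.mem_map]
    rintro x (⟨y, hy, rfl⟩ | hx)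
    · exact hv.trans (add_le_add_left (getD_le_of_mem_topParts hlam hy) _)
    · exact hmu x hx
  rw [smlink_eq, sum_strip fun x hx => hnonneg x ((perm_rsort _).subset hx),
    (perm_rsort _).sum_eq]
  simp [List.sum_map_add]

lemma sum_smlink_snd (hlam : ∀ x ∈ P.1, 0 < x) :
    (smlink c P).2.sum = P.1.sum - (P.1.take c).sum := by
  rw [smlink_eq, strip_eq_self fun x hx => hlam x (List.mem_of_mem_drop hx),
    ← List.take_append_drop c P.1, List.sum_append, List.take_append_drop]
  ring

lemma linkDefect_smlink (hlam : IsPartition P.1) (hmu : ∀ x ∈ P.2, 0 ≤ x) (hv : ValidLink c P) :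
    linkDefect c (smlink c P) = -((c : ℤ) - 1) * linkDefect c P := by
  simp only [linkDefect, sum_smlink_fst hlam hmu hv, sum_smlink_snd hlam.2, linkShift]
  ring

lemma linkDefect_eq_zero_of_iterate_eq (hc : 2 ≤ c) (n : ℕ) (P : List ℤ × List ℤ)
    (hlam : IsPartition P.1) (hmu : ∀ x ∈ P.2, 0 ≤ x) (hv : ∀ m < n, ValidLink c ((smlink c)^[m] P))
    (hend : (smlink c)^[n] P = (List.replicate c 1, [1])) :
    linkDefect c P = 0 := by
  induction n generalizing P with
  | zero =>
    subst hend
    simp [linkDefect]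
  | succ n ih =>
    have hnext := ih (smlink c P) (isPartition_smlink_fst c P)
      (fun x hx => (pos_of_mem_smlink_snd hx).le)
      (fun m hm => hv (m + 1) (by omega)) hend
    rw [linkDefect_smlink hlam hmu (hv 0 n.succ_pos)] at hnext
    exact (mul_eq_zero.1 hnext).resolve_left (by omega)

lemma IsDecoration.sum_fst (hc : 2 ≤ c) (h : IsDecoration c P) :
    P.1.sum = ((c : ℤ) - 1) * P.2.sum + 1 := by
  obtain ⟨hlam, hmu, n, hv, hend⟩ := h
  have := linkDefect_eq_zero_of_iterate_eq hc n P hlam (fun x hx => (hmu.2 x hx).le) hv hend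
  rw [linkDefect] at this
  linarith

end Link

section DoubleLink

variable {c : ℕ} {lam mu : List ℤ} {m : ℤ}

lemma topParts_append_of_length_eq {L M : List ℤ} (h : L.length = c) : topParts c (L ++ M) = L := by
  simp [topParts, ← h, List.take_left']

lemma smlink_of_le (hlam : IsPartition lam) (hmu : IsPartition (m :: mu))
    (hle : m ≤ lam.getD (c - 1) 0 + linkShift c (lam, m :: mu)) :
    smlink c (lam, m :: mu) =
      ((topParts c lam).map (· + linkShift c (lam, m :: mu)) ++ m :: mu, lam.drop c) := by
  set p := linkShift c (lam, m :: mu)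
  have hshift : ∀ x ∈ (topParts c lam).map (· + p), m ≤ x := by
    simp only [List.mem_map]
    rintro _ ⟨y, hy, rfl⟩
    exact hle.trans (add_le_add_left (getD_le_of_mem_topParts hlam hy) _)
  have hm : 0 < m := hmu.2 m List.mem_cons_self
  have hsorted : ((topParts c lam).map (· + p) ++ m :: mu).Pairwise (· ≥ ·) := by
    refine List.pairwise_append.2 ⟨(pairwise_topParts hlam).map _ fun a b h => ?_, hmu.1,
      fun x hx y hy => ?_⟩
    · exact add_le_add_left h p
    · rcases List.mem_cons.1 hy with rfl | hy
      · exact hshift x hx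
      · exact (List.rel_of_pairwise_cons hmu.1 hy).trans (hshift x hx)
  have hpos : ∀ x ∈ (topParts c lam).map (· + p) ++ m :: mu, 0 < x := by
    simp only [List.mem_append]
    rintro x (hx | hx)
    · exact hm.trans_le (hshift x hx)
    · exact hmu.2 x hx
  rw [smlink_eq, rsort_eq_of_perm (List.Perm.refl _) hsorted, strip_eq_self hpos,
    strip_eq_self fun x hx => hlam.2 x (List.mem_of_mem_drop hx)]

lemma linkShift_smlink_of_le (hsum : lam.sum = ((c : ℤ) - 1) * (m :: mu).sum + 1) :
    linkShift c ((topParts c lam).map (· + linkShift c (lam, m :: mu)) ++ m :: mu, lam.drop c) =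
      -linkShift c (lam, m :: mu) := by
  have hdrop : (lam.drop c).sum = lam.sum - (lam.take c).sum := by
    rw [← List.take_append_drop c lam, List.sum_append, List.take_append_drop]
    ring
  simp [linkShift, List.take_left' (by simp : ((topParts c lam).map _).length = c), hdrop, hsum,
    List.sum_map_add]
  ring

lemma smlink_smlink_of_le (hlam : IsPartition lam) (hmu : IsPartition (m :: mu))
    (hsum : lam.sum = ((c : ℤ) - 1) * (m :: mu).sum + 1)
    (hle : m ≤ lam.getD (c - 1) 0 + linkShift c (lam, m :: mu)) :
    smlink c (smlink c (lam, m :: mu)) = (lam, m :: mu) := by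
  rw [smlink_of_le hlam hmu hle, smlink_eq, linkShift_smlink_of_le hsum]
  dsimp only
  rw [topParts_append_of_length_eq (by simp)]
  simp only [List.map_map, Function.comp_def, add_neg_cancel_right, List.map_id']
  rw [strip_rsort_topParts_append_drop hlam, List.drop_left' (by simp), strip_eq_self hmu.2]

end DoubleLink

section Periodic

variable {c : ℕ}

lemma smlink_one_nil (hc : 1 ≤ c) : smlink c ([1], []) = ([1], []) := by
  have hshift : linkShift c ([1], []) = 0 := by
    obtain ⟨c, rfl⟩ := Nat.exists_eq_add_of_le' hc
    simp [linkShift]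
  have hdrop : List.drop c [(1 : ℤ)] = [] := List.drop_of_length_le (by simpa using hc)
  have hpart : IsPartition [(1 : ℤ)] := ⟨List.pairwise_singleton _ _, by simp⟩
  rw [smlink_eq, hshift, hdrop, strip_eq_self (l := []) (by simp)]
  simpa [hdrop] using strip_rsort_topParts_append_drop (c := c) hpart

lemma smlink_replicate_one (c : ℕ) : smlink c (List.replicate c 1, [1]) = ([1], []) := by
  have htop : topParts c (List.replicate c 1) = List.replicate c 1 := by
    simp [topParts]
  have hshift : linkShift c (List.replicate c 1, [1]) = -1 := by
    simp [linkShift]; ring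
  rw [smlink_eq, htop, hshift, List.drop_of_length_le (by simp)]
  refine Prod.ext (List.perm_singleton.1 ?_) rfl
  refine ((perm_rsort _).filter _).trans ?_
  simp [List.filter_append]

lemma eq_of_iterate_eq_of_smlink_smlink_eq (hc : 1 ≤ c) {P : List ℤ × List ℤ} {n : ℕ}
    (hend : (smlink c)^[n] P = (List.replicate c 1, [1])) (hP : smlink c (smlink c P) = P) :
    P = (List.replicate c 1, [1]) := by
  have hper : Function.IsPeriodicPt (smlink c) 2 P := hP
  rw [← hper.iterate_mod_apply] at hend
  rcases Nat.mod_two_eq_zero_or_one n with h0 | h1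
  · simpa [h0] using hend
  · rw [h1, Function.iterate_one] at hend
    have hone : P = ([1], []) := by rw [← hP, hend, smlink_replicate_one]
    rw [hone, smlink_one_nil hc] at hend
    simp at hend

end Periodic

lemma getD_two_add_linkShift_three (lam mu : List ℤ) :
    lam.getD (3 - 1) 0 + linkShift 3 (lam, mu) = mu.sum + 1 - lam.getD 0 0 - lam.getD 1 0 := by
  rcases lam with _ | ⟨x, _ | ⟨y, _ | ⟨z, r⟩⟩⟩ <;> simp [linkShift] <;> ring

/-- For a codimension-3 decoration `(λ, μ)` with `k = ∑μⱼ`, other than the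
complete intersection pair `((1,1,1),(1))`: if `μ₁ + λ₁ + λ₂ ≤ k+1` then the
smallest minimal link of the smallest minimal link of `(λ, μ)` equals `(λ, μ)`
again; consequently every decoration satisfies `μ₁ + λ₁ + λ₂ > k + 1`. -/
theorem stmt3 (P : List ℤ × List ℤ) (k : ℤ) (hk : P.2.sum = k)
    (h : IsDecoration 3 P) :
    (P ≠ (([1, 1, 1] : List ℤ), ([1] : List ℤ)) →
      P.2.getD 0 0 + P.1.getD 0 0 + P.1.getD 1 0 ≤ k + 1 →
      smlink 3 (smlink 3 P) = P) ∧
    k + 1 < P.2.getD 0 0 + P.1.getD 0 0 + P.1.getD 1 0 := by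
  obtain ⟨lam, mu⟩ := P
  subst hk
  have hsum : lam.sum = ((3 : ℕ) - 1 : ℤ) * mu.sum + 1 := h.sum_fst (by norm_num)
  have hdouble : mu.getD 0 0 + lam.getD 0 0 + lam.getD 1 0 ≤ mu.sum + 1 →
      smlink 3 (smlink 3 (lam, mu)) = (lam, mu) := by
    intro hle
    obtain _ | ⟨m, mu⟩ := mu
    · have hlam : lam = [1] := eq_singleton_one_of_sum_eq_one h.1.2 (by simpa using hsum)
      rw [hlam, smlink_one_nil (by norm_num), smlink_one_nil (by norm_num)]
    · refine smlink_smlink_of_le h.1 h.2.1 hsum ?_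
      rw [getD_two_add_linkShift_three]
      simp only [List.getD_cons_zero] at hle
      linarith
  refine ⟨fun _ => hdouble, lt_of_not_ge fun hle => ?_⟩
  obtain ⟨n, -, hend⟩ := h.2.2
  have hCI := eq_of_iterate_eq_of_smlink_smlink_eq (by norm_num) hend (hdouble hle)
  simp only [Prod.mk.injEq] at hCI
  rw [hCI.1, hCI.2] at hle
  norm_num at hle
end

section
/- Let (λ, μ) be a codimension-3 decoration with μ₁ = 1 (so μ = (1^k)). Then either λ₅ = 0 (at most four nonzero parts of λ, the almost complete intersection case) or λ₁ = k (the hyperplane section case). -/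
/-!
For `μ = (1^k)` the restrictions `|λ| = 2k + 1`, `λ₁ ≤ k` and `μ₁ + λ₁ + λ₂ > k + 1`, which
propagate backwards along the chain of links, combine with the validity of the first link to
give `λ₁ + λ₂ = k + 1`. The third restriction, applied to the first link, then forces
`λ = (λ₁, λ₂, λ₂, λ₂, λ₅, …)` with `λ₁ > λ₂`, so that the first link is
`((λ₁ - λ₂, 1^k), (λ₂, λ₅, …))`. The second link is again a pair with `μ = (1^(k-2))`; if
`λ₅ > 0` and `λ₁ < k` it has five nonzero parts and level below `k - 2`, contradicting
induction on the number of links.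
-/

namespace Decoration

open List

lemma rsort_perm (M : List ℤ) : (rsort M).Perm M := perm_insertionSort _ M

lemma isPartition_strip_rsort (M : List ℤ) : IsPartition (strip (rsort M)) :=
  ⟨(pairwise_insertionSort _ M).sublist filter_sublist,
    fun _ hx => of_decide_eq_true (mem_filter.1 hx).2⟩

lemma strip_rsort_subperm (M : List ℤ) : (strip (rsort M)).Subperm M :=
  filter_sublist.subperm.trans (rsort_perm M).subperm

lemma strip_eq_self {l : List ℤ} (h : ∀ x ∈ l, 0 < x) : strip l = l :=
  filter_eq_self.2 fun x hx => decide_eq_true (h x hx)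

lemma sum_strip {l : List ℤ} (h : ∀ x ∈ l, 0 ≤ x) : (strip l).sum = l.sum := by
  induction l with
  | nil => rfl
  | cons a t ih =>
    have ht := ih fun x hx => h x (mem_cons_of_mem a hx)
    rcases (h a mem_cons_self).lt_or_eq with ha | ha
    · simp [strip, ha, ← ht]
    · simp [strip, ← ha, ← ht]

lemma sum_strip_rsort {M : List ℤ} (h : ∀ x ∈ M, 0 ≤ x) : (strip (rsort M)).sum = M.sum := by
  rw [sum_strip fun x hx => h x ((rsort_perm M).mem_iff.1 hx)]
  exact (rsort_perm M).sum_eq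

lemma rsort_eq_of_perm {M S : List ℤ} (hS : S.Pairwise (· ≥ ·)) (h : M.Perm S) : rsort M = S :=
  ((rsort_perm M).trans h).eq_of_pairwise (fun _ _ _ _ h₁ h₂ => le_antisymm h₂ h₁)
    (pairwise_insertionSort _ M) hS

lemma getD_nonneg {l : List ℤ} (h : ∀ x ∈ l, 0 ≤ x) (i : ℕ) : 0 ≤ l.getD i 0 := by
  rcases lt_or_ge i l.length with hi | hi
  · rw [getD_eq_getElem _ _ hi]; exact h _ (getElem_mem hi)
  · rw [getD_eq_default _ _ hi]

lemma getD_le {l : List ℤ} {c : ℤ} (h : ∀ x ∈ l, x ≤ c) (hc : 0 ≤ c) (i : ℕ) :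
    l.getD i 0 ≤ c := by
  rcases lt_or_ge i l.length with hi | hi
  · rw [getD_eq_getElem _ _ hi]; exact h _ (getElem_mem hi)
  · rw [getD_eq_default _ _ hi]; exact hc

lemma le_head_of_pairwise {l : List ℤ} (h : l.Pairwise (· ≥ ·)) {x : ℤ} (hx : x ∈ l) :
    x ≤ l.getD 0 0 := by
  cases l with
  | nil => simp at hx
  | cons a t =>
    rcases mem_cons.1 hx with rfl | hx
    · rfl
    · exact (pairwise_cons.1 h).1 x hx

lemma le_head_strip_rsort {M : List ℤ} {x : ℤ} (hx : x ∈ M) : x ≤ (strip (rsort M)).getD 0 0 := by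
  have hS := isPartition_strip_rsort M
  rcases le_or_gt x 0 with hx0 | hx0
  · exact hx0.trans (getD_nonneg (fun y hy => (hS.2 y hy).le) 0)
  · refine le_head_of_pairwise hS.1 (mem_filter.2 ⟨?_, decide_eq_true hx0⟩)
    exact (rsort_perm M).mem_iff.2 hx

lemma getD_strip_rsort_le {M : List ℤ} {c : ℤ} (h : ∀ x ∈ M, x ≤ c) (hc : 0 ≤ c) (i : ℕ) :
    (strip (rsort M)).getD i 0 ≤ c :=
  getD_le (fun x hx => h x ((strip_rsort_subperm M).subset hx)) hc i

lemma getD_one_strip_rsort_le {a c : ℤ} {T : List ℤ} (hT : ∀ x ∈ T, x ≤ c) (hc : 0 ≤ c) :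
    (strip (rsort (a :: T))).getD 1 0 ≤ c := by
  have hsub := strip_rsort_subperm (a :: T)
  have hsorted := (isPartition_strip_rsort (a :: T)).1
  rcases hS : strip (rsort (a :: T)) with _ | ⟨x, _ | ⟨y, r⟩⟩
  · exact hc
  · exact hc
  rw [hS] at hsub hsorted
  have hyx : y ≤ x := (pairwise_cons.1 hsorted).1 y mem_cons_self
  by_cases hxa : x = a
  · subst hxa
    exact hT y (((subperm_cons x).1 hsub).subset mem_cons_self)
  · have hxT : x ∈ T := (mem_cons.1 (hsub.subset mem_cons_self)).resolve_left hxa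
    exact hyx.trans (hT x hxT)

lemma getD_four_strip_rsort_pos {M : List ℤ} (h : ∀ x ∈ M, 0 < x) (hlen : 5 ≤ M.length) :
    0 < (strip (rsort M)).getD 4 0 := by
  have hperm := rsort_perm M
  rw [strip_eq_self fun x hx => h x (hperm.mem_iff.1 hx)]
  have h4 : 4 < (rsort M).length := by rw [hperm.length_eq]; omega
  rw [getD_eq_getElem _ _ h4]
  exact h _ (hperm.mem_iff.1 (getElem_mem h4))

lemma strip_rsort_zero_zero_ones {d : ℤ} (hd : 1 ≤ d) (K : ℕ) :
    strip (rsort ([d, 0, 0] ++ replicate K 1)) = d :: replicate K 1 := by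
  have hsorted : (d :: (replicate K 1 ++ [0, 0])).Pairwise (· ≥ ·) := by
    simp only [pairwise_cons, pairwise_append, pairwise_replicate, mem_append, mem_replicate,
      mem_cons, not_mem_nil]
    refine ⟨?_, ⟨?_, by simp, ?_⟩⟩ <;> grind
  have hperm : ([d, 0, 0] ++ replicate K 1).Perm (d :: (replicate K 1 ++ [0, 0])) :=
    Perm.cons d perm_append_comm
  rw [rsort_eq_of_perm hsorted hperm]
  simp [strip, filter_append, show (0 : ℤ) < d by omega]

lemma getD_drop (l : List ℤ) (m i : ℕ) : (l.drop m).getD i 0 = l.getD (m + i) 0 := by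
  simp [getD_eq_getElem?_getD, getElem?_drop]

lemma getD_antitone {l : List ℤ} (hl : IsPartition l) {i j : ℕ} (hij : i ≤ j) :
    l.getD j 0 ≤ l.getD i 0 := by
  rcases lt_or_ge j l.length with hj | hj
  · rw [getD_eq_getElem _ _ hj, getD_eq_getElem _ _ (hij.trans_lt hj)]
    rcases hij.lt_or_eq with hij | rfl
    · exact pairwise_iff_getElem.1 hl.1 i j _ hj hij
    · rfl
  · rw [getD_eq_default _ _ hj]
    rcases lt_or_ge i l.length with hi | hi
    · rw [getD_eq_getElem _ _ hi]; exact (hl.2 _ (getElem_mem hi)).le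
    · rw [getD_eq_default _ _ hi]

lemma take_three_append_replicate (l : List ℤ) :
    l.take 3 ++ replicate (3 - l.length) 0 = [l.getD 0 0, l.getD 1 0, l.getD 2 0] := by
  match l with
  | [] | [_] | [_, _] => rfl
  | _ :: _ :: _ :: t => simp

lemma sum_take_three (l : List ℤ) : (l.take 3).sum = l.getD 0 0 + l.getD 1 0 + l.getD 2 0 := by
  have h := congrArg sum (take_three_append_replicate l)
  simp only [sum_append, sum_replicate, smul_zero, add_zero, sum_cons, sum_nil] at h
  rw [h]; ring

lemma sum_drop_three (l : List ℤ) :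
    (l.drop 3).sum = l.sum - (l.getD 0 0 + l.getD 1 0 + l.getD 2 0) := by
  rw [← sum_take_add_sum_drop l 3, sum_take_three]; ring

lemma isPartition_drop {l : List ℤ} (hl : IsPartition l) (m : ℕ) : IsPartition (l.drop m) :=
  ⟨hl.1.drop, fun x hx => hl.2 x (mem_of_mem_drop hx)⟩

lemma smlink_three (l mu : List ℤ) :
    smlink 3 (l, mu) =
      (let p := mu.sum + 1 - (l.getD 0 0 + l.getD 1 0 + l.getD 2 0)
       (strip (rsort ([l.getD 0 0 + p, l.getD 1 0 + p, l.getD 2 0 + p] ++ mu)),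
        strip (l.drop 3))) := by
  simp only [smlink, take_three_append_replicate, sum_take_three, map_cons, map_nil]
  norm_num

lemma validLink_three_iff (l mu : List ℤ) :
    ValidLink 3 (l, mu) ↔ l.getD 0 0 + l.getD 1 0 ≤ mu.sum + 1 := by
  simp only [ValidLink, sum_take_three, Nat.cast_ofNat, Nat.reduceSub]
  omega

def ReachesCI (c n : ℕ) (P : List ℤ × List ℤ) : Prop :=
  (∀ m < n, ValidLink c ((smlink c)^[m] P)) ∧ (smlink c)^[n] P = (replicate c 1, [1])

lemma reachesCI_zero {c : ℕ} {P : List ℤ × List ℤ} :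
    ReachesCI c 0 P ↔ P = (replicate c 1, [1]) :=
  ⟨fun h => h.2, fun h => ⟨fun _ hm => absurd hm (Nat.not_lt_zero _), h⟩⟩

lemma reachesCI_succ {c n : ℕ} {P : List ℤ × List ℤ} :
    ReachesCI c (n + 1) P ↔ ValidLink c P ∧ ReachesCI c n (smlink c P) := by
  simp only [ReachesCI, Function.iterate_succ_apply]
  constructor
  · rintro ⟨hv, he⟩
    exact ⟨hv 0 n.succ_pos, fun m hm => by simpa using hv (m + 1) (by omega), he⟩
  · rintro ⟨h0, hv, he⟩
    refine ⟨fun m hm => ?_, he⟩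
    cases m with
    | zero => exact h0
    | succ m => simpa using hv m (by omega)

/-- The restrictions `|λ| = 2k + 1`, `λ₁ ≤ k` and `μ₁ + λ₁ + λ₂ > k + 1`, where `k = |μ|` and
`λᵢ = l.getD (i - 1) 0`. -/
structure Restrictions (l mu : List ℤ) : Prop where
  sum_eq : l.sum = 2 * mu.sum + 1
  head_le : l.getD 0 0 ≤ mu.sum
  lt_add_head : mu.sum + 2 ≤ mu.getD 0 0 + l.getD 0 0 + l.getD 1 0

lemma Restrictions.of_smlink {l mu : List ℤ} (hl : IsPartition l) (hmu : IsPartition mu)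
    (hv : ValidLink 3 (l, mu)) (h : Restrictions (smlink 3 (l, mu)).1 (smlink 3 (l, mu)).2) :
    Restrictions l mu := by
  rw [validLink_three_iff] at hv
  rw [smlink_three, strip_eq_self fun x hx => hl.2 x (mem_of_mem_drop hx)] at h
  obtain ⟨hsum', hhead', hlt'⟩ := h
  dsimp only at hsum' hhead' hlt'
  set g₀ := l.getD 0 0
  set g₁ := l.getD 1 0
  set g₂ := l.getD 2 0
  set k := mu.sum
  set p := k + 1 - (g₀ + g₁ + g₂)
  have h₂₁ : g₂ ≤ g₁ := getD_antitone hl (by norm_num)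
  have h₁₀ : g₁ ≤ g₀ := getD_antitone hl (by norm_num)
  have hmu_le : ∀ x ∈ mu, x ≤ mu.getD 0 0 := fun x hx => le_head_of_pairwise hmu.1 hx
  have hM : ∀ x ∈ [g₀ + p, g₁ + p, g₂ + p] ++ mu, 0 ≤ x := by
    simp only [forall_mem_append, forall_mem_cons, not_mem_nil, IsEmpty.forall_iff,
      implies_true, and_true]
    exact ⟨⟨by linarith, by linarith, by linarith⟩, fun x hx => (hmu.2 x hx).le⟩
  rw [sum_strip_rsort hM, sum_append, sum_drop_three] at hsum'
  rw [sum_drop_three] at hhead' hlt'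
  simp only [sum_cons, sum_nil] at hsum'
  have hsum : l.sum = 2 * k + 1 := by linarith
  refine ⟨hsum, ?_, ?_⟩
  · linarith [le_head_strip_rsort (M := [g₀ + p, g₁ + p, g₂ + p] ++ mu) (x := g₀ + p) (by simp)]
  · by_contra! hlt
    have hsecond : (strip (rsort ([g₀ + p, g₁ + p, g₂ + p] ++ mu))).getD 1 0 ≤ g₁ + p := by
      refine getD_one_strip_rsort_le (a := g₀ + p) (T := [g₁ + p, g₂ + p] ++ mu) ?_ (by linarith)
      simp only [forall_mem_append, forall_mem_cons, not_mem_nil, IsEmpty.forall_iff,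
        implies_true, and_true]
      exact ⟨⟨le_rfl, by linarith⟩, fun x hx => by linarith [hmu_le x hx]⟩
    have hfirst : (strip (rsort ([g₀ + p, g₁ + p, g₂ + p] ++ mu))).getD 0 0 ≤ g₀ + p := by
      refine getD_strip_rsort_le ?_ (by linarith) 0
      simp only [forall_mem_append, forall_mem_cons, not_mem_nil, IsEmpty.forall_iff,
        implies_true, and_true]
      exact ⟨⟨le_rfl, by linarith, by linarith⟩, fun x hx => by linarith [hmu_le x hx]⟩
    have hfourth : (l.drop 3).getD 0 0 ≤ g₂ := by
      rw [getD_drop]; exact getD_antitone hl (by norm_num)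
    linarith

lemma Restrictions.of_reachesCI {n : ℕ} {l mu : List ℤ} (hl : IsPartition l)
    (hmu : IsPartition mu) (h : ReachesCI 3 n (l, mu)) : Restrictions l mu := by
  induction n generalizing l mu with
  | zero =>
    obtain ⟨rfl, rfl⟩ := Prod.mk.inj (reachesCI_zero.1 h)
    exact ⟨by simp, by simp, by simp⟩
  | succ n ih =>
    obtain ⟨hv, h⟩ := reachesCI_succ.1 h
    refine Restrictions.of_smlink hl hmu hv (ih (isPartition_strip_rsort _) ?_ h)
    rw [smlink_three, strip_eq_self fun x hx => hl.2 x (mem_of_mem_drop hx)]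
    exact isPartition_drop hl 3

lemma isPartition_replicate_one (K : ℕ) : IsPartition (replicate K 1) :=
  ⟨pairwise_replicate.2 (Or.inr le_rfl), fun x hx => by simp [eq_of_mem_replicate hx]⟩

lemma smlink_three_cons (a b c : ℤ) (t mu : List ℤ) :
    smlink 3 (a :: b :: c :: t, mu) =
      (let p := mu.sum + 1 - (a + b + c)
       (strip (rsort ([a + p, b + p, c + p] ++ mu)), strip t)) :=
  smlink_three _ _

lemma smlink_of_tight {a b c : ℤ} {t : List ℤ} {K : ℕ} (ht : ∀ x ∈ t, 0 < x)
    (h : a + b = K + 1) :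
    smlink 3 (a :: b :: c :: t, replicate K 1) =
      (strip (rsort ([a - c, b - c, 0] ++ replicate K 1)), t) := by
  rw [smlink_three_cons, strip_eq_self ht, sum_replicate, nsmul_one]
  have hp : (K : ℤ) + 1 - (a + b + c) = -c := by linarith
  simp only [hp, ← sub_eq_add_neg, sub_self]

lemma smlink_hook {a b f : ℤ} {t : List ℤ} {K : ℕ} (htight : a + b = K + 3)
    (hsum : 2 * b + f + t.sum = K + 2) :
    smlink 3 ((a - b) :: replicate (K + 2) 1, b :: f :: t) =
      (strip (rsort ([a - 2, b - 1, b - 1, b, f] ++ t)), replicate K 1) := by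
  rw [replicate_succ, replicate_succ, smlink_three_cons,
    strip_eq_self fun x hx => by simp [eq_of_mem_replicate hx]]
  have hq : (b :: f :: t).sum + 1 - (a - b + 1 + 1) = K + 1 - a := by
    simp only [sum_cons]; omega
  dsimp only
  rw [hq, show a - b + (K + 1 - a) = a - 2 by omega, show 1 + (K + 1 - a) = b - 1 by omega]
  rfl

lemma forall_mem_append_ones_le {s : List ℤ} {c : ℤ} {K : ℕ} (hs : ∀ x ∈ s, x ≤ c)
    (hc : 1 ≤ c) : ∀ x ∈ s ++ replicate K 1, x ≤ c := by
  intro x hx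
  rcases mem_append.1 hx with hx | hx
  · exact hs x hx
  · rwa [eq_of_mem_replicate hx]

lemma parts_eq_of_restrictions_link {a b c e f : ℤ} {t : List ℤ} {K : ℕ}
    (hba : b ≤ a) (hcb : c ≤ b) (hec : e ≤ c) (hf : 0 < f) (ht : 0 ≤ t.sum)
    (htight : a + b = K + 1) (hsum : a + b + c + e + f + t.sum = 2 * K + 1)
    (hR : Restrictions (strip (rsort ([a - c, b - c, 0] ++ replicate K 1))) (e :: f :: t)) :
    b = c ∧ e = b ∧ b < a := by
  have hlt := hR.lt_add_head
  simp only [sum_cons, getD_cons_zero] at hlt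
  have hhead (m : ℤ) (hm : 1 ≤ m) (ha : a - c ≤ m) (hb : b - c ≤ m) :
      (strip (rsort ([a - c, b - c, 0] ++ replicate K 1))).getD 0 0 ≤ m :=
    getD_strip_rsort_le (forall_mem_append_ones_le (by simp; omega) hm) (by omega) 0
  have hsecond (m : ℤ) (hm : 1 ≤ m) (hb : b - c ≤ m) :
      (strip (rsort ([a - c, b - c, 0] ++ replicate K 1))).getD 1 0 ≤ m :=
    getD_one_strip_rsort_le (T := [b - c, 0] ++ replicate K 1)
      (forall_mem_append_ones_le (by simp; omega) hm) (by omega)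
  obtain rfl : b = c := by
    by_contra hne
    linarith [hhead (a - c) (by omega) le_rfl (by omega), hsecond (b - c) (by omega) le_rfl]
  obtain hab | rfl := hba.lt_or_eq
  · refine ⟨rfl, ?_, hab⟩
    linarith [hhead (a - b) (by omega) le_rfl (by omega), hsecond 1 le_rfl (by omega)]
  · linarith [hhead 1 le_rfl (by omega) (by omega), hsecond 1 le_rfl (by omega)]

lemma le_chain_of_isPartition {a b c e f : ℤ} {t : List ℤ}
    (hl : IsPartition (a :: b :: c :: e :: f :: t)) :
    b ≤ a ∧ c ≤ b ∧ e ≤ c ∧ f ≤ e ∧ 0 < f ∧ 0 ≤ t.sum := by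
  simp only [IsPartition, pairwise_cons, mem_cons, forall_eq_or_imp] at hl
  obtain ⟨⟨⟨hba, -⟩, ⟨hcb, -⟩, ⟨hec, -⟩, ⟨hfe, -⟩, -⟩, -, -, -, -, hf, ht⟩ := hl
  exact ⟨hba, hcb, hec, hfe, hf, sum_nonneg fun x hx => (ht x hx).le⟩

/-- By `smlink_hook`, this is the second link of `((a, b, b, b, f, …), (1^(K+2)))`. -/
lemma getD_four_pos_and_head_lt_of_hook {a b f : ℤ} {t : List ℤ} {K : ℕ}
    (hT : IsPartition (b :: f :: t)) (hab : b < a) (hb : 2 ≤ b) (htight : a + b = K + 3)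
    (hsum : 2 * b + f + t.sum = K + 2) :
    0 < (strip (rsort ([a - 2, b - 1, b - 1, b, f] ++ t))).getD 4 0 ∧
      (strip (rsort ([a - 2, b - 1, b - 1, b, f] ++ t))).getD 0 0 < K := by
  obtain ⟨hf, ht⟩ : 0 < f ∧ 0 ≤ t.sum :=
    ⟨hT.2 f (by simp), sum_nonneg fun x hx => (hT.2 x (by simp [hx])).le⟩
  constructor
  · refine getD_four_strip_rsort_pos (fun x hx => ?_) (by simp)
    rcases mem_append.1 hx with hx | hx
    · simp only [mem_cons, not_mem_nil, or_false] at hx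
      omega
    · exact hT.2 x (by simp [hx])
  · have hK : (strip (rsort ([a - 2, b - 1, b - 1, b, f] ++ t))).getD 0 0 ≤ max (a - 2) b := by
      refine getD_strip_rsort_le (fun x hx => ?_) (by omega) 0
      rcases mem_append.1 hx with hx | hx
      · simp only [mem_cons, not_mem_nil, or_false] at hx
        omega
      · exact (le_head_of_pairwise hT.1 (by simp [hx])).trans (le_max_right _ _)
    omega

theorem getD_four_eq_zero_or_head_eq {n : ℕ} {l : List ℤ} {K : ℕ} (hl : IsPartition l)
    (h : ReachesCI 3 n (l, replicate K 1)) : l.getD 4 0 = 0 ∨ l.getD 0 0 = K := by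
  induction n using Nat.strong_induction_on generalizing l K with
  | _ n ih =>
  rw [or_iff_not_imp_left]
  intro hfifth
  obtain ⟨a, b, c, e, f, t, rfl⟩ : ∃ a b c e f t, l = a :: b :: c :: e :: f :: t := by
    match l with
    | a :: b :: c :: e :: f :: t => exact ⟨a, b, c, e, f, t, rfl⟩
    | [] | [_] | [_, _] | [_, _, _] | [_, _, _, _] => exact absurd rfl hfifth
  show a = K
  by_contra hne
  obtain ⟨hba, hcb, hec, hfe, hf, ht⟩ := le_chain_of_isPartition hl
  have hT : IsPartition (e :: f :: t) := isPartition_drop hl 3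
  obtain ⟨hsum, hhead, hlt⟩ := Restrictions.of_reachesCI hl (isPartition_replicate_one K) h
  simp only [sum_cons, sum_replicate, nsmul_one, getD_cons_zero, getD_cons_succ] at hsum hhead hlt
  obtain ⟨K, rfl⟩ : ∃ K', K = K' + 2 := ⟨K - 2, by omega⟩
  push_cast at hsum hhead hlt hne
  rw [replicate_succ, getD_cons_zero] at hlt
  obtain _ | n := n
  · simp [reachesCI_zero] at h
  obtain ⟨hv, h⟩ := reachesCI_succ.1 h
  rw [validLink_three_iff, sum_replicate, nsmul_one] at hv
  have htight : a + b = ↑(K + 2) + 1 := by push_cast; simp at hv; omega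
  rw [smlink_of_tight hT.2 htight] at h
  obtain ⟨hbc, heb, hab⟩ := parts_eq_of_restrictions_link hba hcb hec hf ht htight (by omega)
    (Restrictions.of_reachesCI (isPartition_strip_rsort _) hT h)
  subst c e
  rw [sub_self, strip_rsort_zero_zero_ones (by omega)] at h
  obtain _ | n := n
  · simp [reachesCI_zero] at h
  obtain ⟨-, h⟩ := reachesCI_succ.1 h
  rw [smlink_hook (by omega) (by omega)] at h
  have hhook :=
    getD_four_pos_and_head_lt_of_hook (K := K) hT hab (by omega) (by omega) (by omega)
  rcases ih n (by omega) (isPartition_strip_rsort _) h with h5 | h0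
  · exact hhook.1.ne' h5
  · exact hhook.2.ne h0

lemma eq_replicate_one_of_head_eq_one {mu : List ℤ} (hmu : IsPartition mu)
    (h : mu.getD 0 0 = 1) : mu = replicate mu.length 1 :=
  eq_replicate_of_mem fun x hx =>
    le_antisymm (h ▸ le_head_of_pairwise hmu.1 hx) (hmu.2 x hx)

end Decoration

/-- A codimension-3 decoration `(λ, μ)` with `μ₁ = 1` (so `μ = (1^k)`) must
have either `λ₅ = 0` (at most four nonzero parts: the almost complete
intersection case) or `λ₁ = k` (the hyperplane section case). -/
theorem stmt15 (P : List ℤ × List ℤ) (k : ℤ) (hk : P.2.sum = k)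
    (h : IsDecoration 3 P) (hmu : P.2.getD 0 0 = 1) :
    P.1.getD 4 0 = 0 ∨ P.1.getD 0 0 = k := by
  obtain ⟨l, mu⟩ := P
  obtain ⟨hl, hmu_part, n, hn⟩ := h
  dsimp only at hk hmu hmu_part ⊢
  rw [Decoration.eq_replicate_one_of_head_eq_one hmu_part hmu] at hn hk
  rw [← hk, List.sum_replicate, nsmul_one]
  exact Decoration.getD_four_eq_zero_or_head_eq hl hn
end
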